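/- Let I be a finite index set, {|γᵢ⟩}_{i∈I} vectors in A⊗B, and α, β ∈ ℂ^I. Set |γ_α⟩ = Σᵢ αᵢ|γᵢ⟩, |γ_β⟩ = Σᵢ βᵢ|γᵢ⟩, p(i) = |αᵢ|², q(i) = |βᵢ|², and z_{ij} = αᵢᾱⱼ − βᵢβ̄ⱼ for i ≠ j. Then D_tr(γ_α^B, γ_β^B) ≤ min over permutations σ of I of Σᵢ D_tr(p(i)γᵢ^B, q(σ(i))γ_{σ(i)}^B) + Σᵢ Σ_{j≠i} |z_{ij}|·F(γᵢ^A, γⱼ^A). -/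

import Mathlib

open Matrix Kronecker
open scoped ComplexOrder
set_option linter.unusedSectionVars false
set_option maxHeartbeats 1600000
noncomputable section

open scoped Classical in
/-- total matrix square root: the PSD square root when `M` is PSD, else `0`. -/
def matSqrt {n : Type*} [Fintype n] [DecidableEq n] (M : Matrix n n ℂ) : Matrix n n ℂ :=
  if h : M.PosSemidef then
    h.1.eigenvectorUnitary.1 * diagonal ((↑) ∘ Real.sqrt ∘ h.1.eigenvalues) *
      (star h.1.eigenvectorUnitary : Matrix n n ℂ) else 0

/-- trace (Schatten-1) norm `Tr √(MᴴM)`. -/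
def traceNorm {n : Type*} [Fintype n] [DecidableEq n] (M : Matrix n n ℂ) : ℝ :=
  (matSqrt (Mᴴ * M)).trace.re

/-- trace distance. -/
def traceDist {n : Type*} [Fintype n] [DecidableEq n] (ρ σ : Matrix n n ℂ) : ℝ :=
  traceNorm (ρ - σ) / 2

/-- fidelity `‖√ρ√σ‖₁`. -/
def fidelity {n : Type*} [Fintype n] [DecidableEq n] (ρ σ : Matrix n n ℂ) : ℝ :=
  traceNorm (matSqrt ρ * matSqrt σ)

/-- partial trace over the first tensor factor. -/
def trFst {a b : Type*} [Fintype a] (M : Matrix (a × b) (a × b) ℂ) : Matrix b b ℂ :=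
  Matrix.of fun i j => ∑ k, M (k, i) (k, j)

/-- partial trace over the second tensor factor. -/
def trSnd {a b : Type*} [Fintype b] (M : Matrix (a × b) (a × b) ℂ) : Matrix a a ℂ :=
  Matrix.of fun i j => ∑ k, M (i, k) (j, k)

/-- rank-one projector `|v⟩⟨v|`. -/
def outerP {n : Type*} (v : n → ℂ) : Matrix n n ℂ :=
  Matrix.of fun i j => v i * star (v j)

/-- tensor product of vectors. -/
def vkron {a b : Type*} (v : a → ℂ) (w : b → ℂ) : a × b → ℂ :=
  fun p => v p.1 * w p.2



namespace Aux

variable {n m : Type*} [Fintype n] [DecidableEq n] [Fintype m] [DecidableEq m]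

/-- Euclidean norm of a complex vector. -/
def en (x : n → ℂ) : ℝ := Real.sqrt (∑ i, Complex.normSq (x i))

lemma en_nonneg (x : n → ℂ) : 0 ≤ en x := Real.sqrt_nonneg _

lemma re_star_dot (x : n → ℂ) : (dotProduct (star x) x).re = ∑ i, Complex.normSq (x i) := by
  simp [dotProduct, Complex.re_sum]
  refine Finset.sum_congr rfl fun i _ => ?_
  simpa [mul_comm] using congrArg Complex.re (Complex.mul_conj (x i))

lemma en_sq (x : n → ℂ) : en x ^ 2 = (dotProduct (star x) x).re := by
  rw [re_star_dot, en, Real.sq_sqrt]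
  exact Finset.sum_nonneg fun i _ => Complex.normSq_nonneg _

lemma abs_apply_le (x : n → ℂ) (i : n) : ‖x i‖ ≤ en x := by
  have h1 : ‖x i‖ = Real.sqrt (Complex.normSq (x i)) := by
    rw [Complex.norm_def]
  rw [h1, en]
  apply Real.sqrt_le_sqrt
  exact Finset.single_le_sum (f := fun j => Complex.normSq (x j))
    (fun j _ => Complex.normSq_nonneg _) (Finset.mem_univ i)

lemma en_eq_norm (x : n → ℂ) : en x = ‖(WithLp.equiv 2 (n → ℂ)).symm x‖ := by
  rw [EuclideanSpace.norm_eq, en]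
  congr 1
  refine Finset.sum_congr rfl fun i _ => ?_
  simp [Complex.sq_norm]

lemma abs_dot_le (x y : n → ℂ) : ‖(dotProduct (star x) y)‖ ≤ en x * en y := by
  have h := norm_inner_le_norm (𝕜 := ℂ) ((WithLp.equiv 2 (n → ℂ)).symm x)
    ((WithLp.equiv 2 (n → ℂ)).symm y)
  rw [EuclideanSpace.inner_eq_star_dotProduct, dotProduct_comm, ← en_eq_norm, ← en_eq_norm] at h
  exact h


/-- contraction -/
def Con (M : Matrix m n ℂ) : Prop := ∀ x : n → ℂ, en (M *ᵥ x) ≤ en x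

lemma con_mul {l : Type*} [Fintype l] [DecidableEq l] {M : Matrix l m ℂ} {N : Matrix m n ℂ}
    (hM : Con M) (hN : Con N) : Con (M * N) := fun x => by
  rw [← mulVec_mulVec]
  exact (hM _).trans (hN x)

lemma dot_star_mulVec (M : Matrix m n ℂ) (x y : n → ℂ) :
    dotProduct (star (M *ᵥ x)) (M *ᵥ y) = dotProduct (star x) ((Mᴴ * M) *ᵥ y) := by
  simp only [star_mulVec, dotProduct_mulVec, vecMul_vecMul]

lemma en_sq_le_of_psd {M : Matrix n n ℂ} (h : (1 - M).PosSemidef) (x : n → ℂ) :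
    (dotProduct (star x) (M *ᵥ x)).re ≤ en x ^ 2 := by
  have h2 := h.dotProduct_mulVec_nonneg x
  rw [sub_mulVec, one_mulVec, dotProduct_sub] at h2
  have := (Complex.le_def.mp h2).1
  simp only [Complex.zero_re, Complex.sub_re] at this
  rw [en_sq]; linarith

lemma con_of_psd {M : Matrix m n ℂ} (h : (1 - Mᴴ * M).PosSemidef) : Con M := by
  intro x
  have key : en (M *ᵥ x) ^ 2 ≤ en x ^ 2 := by
    rw [en_sq, dot_star_mulVec]
    exact en_sq_le_of_psd h x
  have := abs_le_abs (a := en (M *ᵥ x)) (b := en x)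
  nlinarith [en_nonneg (M *ᵥ x), en_nonneg x]

lemma con_conjTranspose {M : Matrix m n ℂ} (hM : Con M) : Con Mᴴ := by
  intro y
  have h1 : en (Mᴴ *ᵥ y) ^ 2 ≤ en y * en (Mᴴ *ᵥ y) := by
    rw [en_sq]
    calc (dotProduct (star (Mᴴ *ᵥ y)) (Mᴴ *ᵥ y)).re
        = (dotProduct (star y) (M *ᵥ (Mᴴ *ᵥ y))).re := by
          simp only [star_mulVec, dotProduct_mulVec, vecMul_vecMul,
            conjTranspose_conjTranspose]
      _ ≤ ‖dotProduct (star y) (M *ᵥ (Mᴴ *ᵥ y))‖ := Complex.re_le_norm _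
      _ ≤ en y * en (M *ᵥ (Mᴴ *ᵥ y)) := abs_dot_le _ _
      _ ≤ en y * en (Mᴴ *ᵥ y) := by
          exact mul_le_mul_of_nonneg_left (hM _) (en_nonneg y)
  rcases eq_or_lt_of_le (en_nonneg (Mᴴ *ᵥ y)) with h | h
  · rw [← h]; exact en_nonneg y
  · nlinarith

lemma con_unitary (U : Matrix n n ℂ) (hU : U ∈ unitaryGroup n ℂ) : Con U := by
  apply con_of_psd
  have : Uᴴ * U = 1 := mem_unitaryGroup_iff'.mp hU
  rw [show (Uᴴ : Matrix n n ℂ) = star U from rfl] at *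
  rw [this, sub_self]
  exact PosSemidef.zero


lemma en_single (i : n) : en (Pi.single i (1:ℂ)) = 1 := by
  rw [en]
  have h : (∑ j : n, Complex.normSq ((Pi.single i 1 : n → ℂ) j)) = 1 := by
    rw [Finset.sum_eq_single i]
    · simp
    · intro j _ hj; simp [Pi.single_apply, hj]
    · simp
  rw [h]; exact Real.sqrt_one

lemma con_diag_le {E : Matrix n n ℂ} (hE : Con E) (i : n) : (E i i).re ≤ 1 := by
  have h1 : ‖E i i‖ ≤ 1 := by
    have h2 : E i i = (E *ᵥ Pi.single i 1) i := by simp [mulVec_single]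
    rw [h2]
    exact (abs_apply_le _ i).trans (by rw [← en_single (i := i)] at *; exact hE _)
  exact (Complex.re_le_norm _).trans h1

/-- Lemma S : for a contraction D and PSD Q, Re tr(D Q) ≤ Re tr Q. -/
lemma re_trace_con_psd_le {D Q : Matrix n n ℂ} (hD : Con D) (hQ : Q.PosSemidef) :
    (trace (D * Q)).re ≤ (trace Q).re := by
  set V : Matrix n n ℂ := (hQ.1.eigenvectorUnitary : Matrix n n ℂ)
  have hV : V ∈ unitaryGroup n ℂ := (hQ.1.eigenvectorUnitary).2
  have hVs : (star V) ∈ unitaryGroup n ℂ := by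
    rw [mem_unitaryGroup_iff]
    simpa using mem_unitaryGroup_iff'.mp hV
  set d : n → ℂ := (fun i => (hQ.1.eigenvalues i : ℂ))
  have hspec : Q = V * diagonal d * (star V) := by
    have := hQ.1.spectral_theorem
    rw [Unitary.conjStarAlgAut_apply] at this
    exact this
  have htr : trace (D * Q) = trace ((star V * D * V) * diagonal d) := by
    rw [hspec, show D * (V * diagonal d * star V) = (D * V * diagonal d) * star V by
      noncomm_ring, trace_mul_comm]
    noncomm_ring
  have htrQ : trace Q = trace (diagonal d) := by
    rw [hspec, trace_mul_comm, ← mul_assoc, mem_unitaryGroup_iff'.mp hV, one_mul]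
  have hE : Con (star V * D * V) := con_mul (con_mul (con_unitary _ hVs) hD) (con_unitary _ hV)
  rw [htr, htrQ, trace_diagonal]
  have hdiag : trace ((star V * D * V) * diagonal d) = ∑ i, (star V * D * V) i i * d i := by
    rw [trace]
    exact Finset.sum_congr rfl fun i _ => by simp [diag, mul_diagonal]
  rw [hdiag, Complex.re_sum, Complex.re_sum]
  refine Finset.sum_le_sum fun i _ => ?_
  have hd_re : (d i).re = hQ.1.eigenvalues i := by simp [d]
  have hd_im : (d i).im = 0 := by simp [d]
  have hnn : 0 ≤ (d i).re := by rw [hd_re]; exact hQ.eigenvalues_nonneg i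
  have hEii := con_diag_le hE i
  have : ((star V * D * V) i i * d i).re
      = ((star V * D * V) i i).re * (d i).re := by
    rw [Complex.mul_re, hd_im]; ring
  rw [this]
  nlinarith


lemma matSqrt_of_psd {M : Matrix n n ℂ} (h : M.PosSemidef) : matSqrt M = cfc Real.sqrt M := by
  rw [matSqrt, dif_pos h, h.1.cfc_eq, IsHermitian.cfc, Unitary.conjStarAlgAut_apply]
  rfl

lemma matSqrt_psd {M : Matrix n n ℂ} (h : M.PosSemidef) : (matSqrt M).PosSemidef := by
  rw [matSqrt, dif_pos h]
  have hD : (diagonal ((↑) ∘ Real.sqrt ∘ h.1.eigenvalues : n → ℂ)).PosSemidef :=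
    posSemidef_diagonal_iff.mpr fun i => by simp
  exact hD.mul_mul_conjTranspose_same (h.1.eigenvectorUnitary : Matrix n n ℂ)

lemma matSqrt_sq {M : Matrix n n ℂ} (h : M.PosSemidef) : matSqrt M * matSqrt M = M := by
  rw [matSqrt, dif_pos h]
  set U := h.1.eigenvectorUnitary
  set D : Matrix n n ℂ := diagonal ((↑) ∘ Real.sqrt ∘ h.1.eigenvalues)
  have hU : (star (U : Matrix n n ℂ)) * (U : Matrix n n ℂ) = 1 := mem_unitaryGroup_iff'.mp U.2
  have e : (U : Matrix n n ℂ) * D * star (U : Matrix n n ℂ) * ((U : Matrix n n ℂ) * D *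
      star (U : Matrix n n ℂ)) = (U : Matrix n n ℂ) * (D * (star (U : Matrix n n ℂ) *
      (U : Matrix n n ℂ)) * D) * star (U : Matrix n n ℂ) := by
    simp only [Matrix.mul_assoc]
  rw [e, hU, Matrix.mul_one, diagonal_mul_diagonal]
  conv_rhs => rw [h.1.spectral_theorem]
  rw [Unitary.conjStarAlgAut_apply]
  congr 2
  congr 1
  funext i
  simp only [Function.comp_apply]
  rw [← Complex.ofReal_mul, Real.mul_self_sqrt (h.eigenvalues_nonneg i)]
  rfl

lemma psd_smul_real {X : Matrix n n ℂ} (h : X.PosSemidef) {r : ℝ} (hr : 0 ≤ r) :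
    ((r : ℂ) • X).PosSemidef := by
  exact h.smul (Complex.zero_le_real.mpr hr)

lemma Pe_posdef {N : Matrix n n ℂ} (hN : N.PosSemidef) {ε : ℝ} (hε : 0 < ε) :
    (matSqrt N + (ε : ℂ) • 1).PosDef := by
  apply Matrix.PosDef.posSemidef_add (matSqrt_psd hN)
  have h1 : ((ε:ℂ) • (1 : Matrix n n ℂ)) = diagonal (fun _ => (ε:ℂ)) := by
    ext i j
    by_cases h : i = j <;> simp [Matrix.one_apply, diagonal, h]
  rw [h1]
  apply posDef_diagonal_iff.mpr
  intro i
  exact_mod_cast hε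

lemma Pe_herm {N : Matrix n n ℂ} (hN : N.PosSemidef) {ε : ℝ} (hε : 0 < ε) :
    (matSqrt N + (ε : ℂ) • 1).IsHermitian := (Pe_posdef hN hε).1

lemma Pe_inv_herm {N : Matrix n n ℂ} (hN : N.PosSemidef) {ε : ℝ} (hε : 0 < ε) :
    (matSqrt N + (ε : ℂ) • 1)⁻¹.IsHermitian := (Pe_herm hN hε).inv

lemma Pe_mul_inv {N : Matrix n n ℂ} (hN : N.PosSemidef) {ε : ℝ} (hε : 0 < ε) :
    (matSqrt N + (ε : ℂ) • 1) * (matSqrt N + (ε : ℂ) • 1)⁻¹ = 1 :=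
  mul_nonsing_inv _ ((Matrix.isUnit_iff_isUnit_det _).mp (Pe_posdef hN hε).isUnit)

lemma Pe_inv_mul {N : Matrix n n ℂ} (hN : N.PosSemidef) {ε : ℝ} (hε : 0 < ε) :
    (matSqrt N + (ε : ℂ) • 1)⁻¹ * (matSqrt N + (ε : ℂ) • 1) = 1 :=
  nonsing_inv_mul _ ((Matrix.isUnit_iff_isUnit_det _).mp (Pe_posdef hN hε).isUnit)

lemma Pe_comm {N : Matrix n n ℂ} (hN : N.PosSemidef) {ε : ℝ} (hε : 0 < ε) :
    matSqrt N * (matSqrt N + (ε : ℂ) • 1)⁻¹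
    = (matSqrt N + (ε : ℂ) • 1)⁻¹ * matSqrt N := by
  set P := matSqrt N
  set Pe := P + (ε : ℂ) • 1 with hPe
  have h : P * Pe = Pe * P := by
    rw [hPe, mul_add, add_mul, mul_smul_comm, smul_mul_assoc, mul_one, one_mul]
  calc P * Pe⁻¹ = (Pe⁻¹ * Pe) * (P * Pe⁻¹) := by rw [Pe_inv_mul hN hε, one_mul]
    _ = Pe⁻¹ * (Pe * P) * Pe⁻¹ := by noncomm_ring
    _ = Pe⁻¹ * (P * Pe) * Pe⁻¹ := by rw [h]
    _ = (Pe⁻¹ * P) * (Pe * Pe⁻¹) := by noncomm_ring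
    _ = Pe⁻¹ * P := by rw [Pe_mul_inv hN hε, mul_one]

/-- key PSD fact : `1 - Pe⁻¹ N Pe⁻¹ ⪰ 0`. -/
lemma psd_key {N : Matrix n n ℂ} (hN : N.PosSemidef) {ε : ℝ} (hε : 0 < ε) :
    (1 - (matSqrt N + (ε : ℂ) • 1)⁻¹ * N * (matSqrt N + (ε : ℂ) • 1)⁻¹).PosSemidef := by
  set P := matSqrt N with hP
  set Pe := P + (ε : ℂ) • 1 with hPe
  set X : Matrix n n ℂ := ((2*ε : ℝ) : ℂ) • P + ((ε^2 : ℝ) : ℂ) • 1 with hX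
  have hPP : P * P = N := matSqrt_sq hN
  have hsq : Pe * Pe - N = X := by
    rw [hPe, hX, mul_add, add_mul, add_mul, smul_mul_assoc, mul_smul_comm, smul_mul_assoc,
      one_mul, mul_one, hPP]
    simp only [one_mul, mul_one, smul_smul]
    push_cast
    module
  have hkey : 1 - Pe⁻¹ * N * Pe⁻¹ = Pe⁻¹ * X * Pe⁻¹ := by
    rw [← hsq, mul_sub, sub_mul]
    congr 1
    rw [show Pe⁻¹ * (Pe * Pe) * Pe⁻¹ = (Pe⁻¹ * Pe) * (Pe * Pe⁻¹) by noncomm_ring,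
      Pe_inv_mul hN hε, Pe_mul_inv hN hε, one_mul]
  rw [hkey]
  have hpsd : X.PosSemidef := by
    apply Matrix.PosSemidef.add
    · exact psd_smul_real (matSqrt_psd hN) (by positivity)
    · exact psd_smul_real Matrix.PosSemidef.one (by positivity)
  have h2 := hpsd.mul_mul_conjTranspose_same Pe⁻¹
  rwa [(Pe_inv_herm hN hε).eq] at h2


lemma eps_limit {a b c : ℝ} (h : ∀ ε : ℝ, 0 < ε → a ≤ b + ε * c) : a ≤ b := by
  refine le_of_forall_pos_le_add fun δ hδ => ?_
  have hc : c ≤ max c 1 := le_max_left _ _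
  have hm : 0 < max c 1 := lt_of_lt_of_le one_pos (le_max_right _ _)
  have h1 := h (δ / max c 1) (by positivity)
  have h2 : (δ / max c 1) * c ≤ δ := by
    rw [div_mul_eq_mul_div, div_le_iff₀ hm]
    nlinarith
  linarith

/-- contraction of `M * Pe⁻¹` where `Pe = √(MᴴM) + ε`. -/
lemma con_W {M : Matrix m n ℂ} {ε : ℝ} (hε : 0 < ε) :
    Con (M * (matSqrt (Mᴴ * M) + (ε : ℂ) • 1)⁻¹) := by
  have hN : (Mᴴ * M).PosSemidef := posSemidef_conjTranspose_mul_self M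
  apply con_of_psd
  have hherm := Pe_inv_herm hN hε
  have h1 : (M * (matSqrt (Mᴴ * M) + (ε : ℂ) • 1)⁻¹)ᴴ * (M * (matSqrt (Mᴴ * M) + (ε : ℂ) • 1)⁻¹)
      = (matSqrt (Mᴴ * M) + (ε : ℂ) • 1)⁻¹ * (Mᴴ * M) * (matSqrt (Mᴴ * M) + (ε : ℂ) • 1)⁻¹ := by
    rw [conjTranspose_mul, hherm.eq]
    simp only [Matrix.mul_assoc]
  rw [h1]
  exact psd_key hN hε

/-- Lemma U : duality upper bound. -/
lemma re_trace_con_le (M : Matrix n n ℂ) {C : Matrix n n ℂ} (hC : Con C) :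
    (trace (C * M)).re ≤ traceNorm M := by
  have hN : (Mᴴ * M).PosSemidef := posSemidef_conjTranspose_mul_self M
  set P := matSqrt (Mᴴ * M) with hP
  have hPpsd : P.PosSemidef := matSqrt_psd hN
  apply eps_limit (c := Fintype.card n)
  intro ε hε
  set Pe := P + (ε : ℂ) • 1 with hPe
  set W := M * Pe⁻¹ with hW
  have hMW : M = W * Pe := by rw [hW, mul_assoc, Pe_inv_mul hN hε, mul_one]
  have hCW : Con (C * W) := con_mul hC (con_W hε)
  have h0 : C * M = (C * W) * P + (ε:ℂ) • (C * W) := by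
    rw [hMW, hPe, mul_add, mul_smul_comm, mul_one, mul_add, mul_smul_comm, hW]
    noncomm_ring
  have h1 : trace (C * M) = trace ((C * W) * P) + (ε : ℂ) * trace (C * W) := by
    rw [h0, trace_add, trace_smul, smul_eq_mul]
  have h2 : ((C * W) * P).trace.re ≤ P.trace.re := re_trace_con_psd_le hCW hPpsd
  have h3 : (C * W).trace.re ≤ (1 : Matrix n n ℂ).trace.re := by
    have := re_trace_con_psd_le hCW (Matrix.PosSemidef.one (n := n) (R := ℂ))
    rwa [mul_one] at this
  have h4 : ((1 : Matrix n n ℂ)).trace.re = Fintype.card n := by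
    simp [trace_one]
  rw [h1]
  simp only [Complex.add_re, Complex.mul_re, Complex.ofReal_re, Complex.ofReal_im]
  rw [traceNorm, ← hP]
  nlinarith [h3, h4]

/-- Lemma A : approximate attainment. -/
lemma exists_con_attain (M : Matrix n n ℂ) {δ : ℝ} (hδ : 0 < δ) :
    ∃ C : Matrix n n ℂ, Con C ∧ traceNorm M ≤ (trace (C * M)).re + δ := by
  have hN : (Mᴴ * M).PosSemidef := posSemidef_conjTranspose_mul_self M
  set P := matSqrt (Mᴴ * M) with hP
  have hPpsd : P.PosSemidef := matSqrt_psd hN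
  set c : ℝ := Fintype.card n + 1 with hc
  have hcpos : (0:ℝ) < c := by positivity
  set ε : ℝ := δ / c with hεdef
  have hε : 0 < ε := by positivity
  set Pe := P + (ε : ℂ) • 1 with hPe
  refine ⟨Pe⁻¹ * Mᴴ, ?_, ?_⟩
  · have : Pe⁻¹ * Mᴴ = (M * Pe⁻¹)ᴴ := by
      rw [conjTranspose_mul, (Pe_inv_herm hN hε).eq]
    rw [this]
    exact con_conjTranspose (con_W hε)
  · have hPPN : P * P = Mᴴ * M := matSqrt_sq hN
    have h1 : (Pe⁻¹ * Mᴴ) * M = Pe⁻¹ * (P * P) := by rw [mul_assoc, hPPN]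
    have h2 : P - Pe⁻¹ * (P * P) = (ε : ℂ) • (Pe⁻¹ * P) := by
      have ha : Pe⁻¹ * (Pe * P) = P := by rw [← mul_assoc, Pe_inv_mul hN hε, one_mul]
      have hb : Pe * P = P * P + (ε:ℂ) • P := by
        rw [hPe, add_mul, smul_mul_assoc, one_mul]
      calc P - Pe⁻¹ * (P * P) = Pe⁻¹ * (Pe * P) - Pe⁻¹ * (P * P) := by rw [ha]
        _ = Pe⁻¹ * (Pe * P - P * P) := by rw [mul_sub]
        _ = Pe⁻¹ * ((ε:ℂ) • P) := by rw [hb, add_sub_cancel_left]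
        _ = (ε : ℂ) • (Pe⁻¹ * P) := by rw [mul_smul_comm]
    -- contraction of Pe⁻¹ * P
    have hConD : Con (Pe⁻¹ * P) := by
      have hcw := con_W (M := P) hε
      rw [hPpsd.1.eq, hPPN, ← hP, ← hPe] at hcw
      have hcomm := Pe_comm hN hε
      rw [← hP, ← hPe] at hcomm
      rw [← hcomm]
      exact hcw
    have h3 : (trace (Pe⁻¹ * P)).re ≤ Fintype.card n := by
      have := re_trace_con_psd_le hConD (Matrix.PosSemidef.one (n := n) (R := ℂ))
      rw [mul_one] at this
      simpa [trace_one] using this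
    have h4 : trace P - trace ((Pe⁻¹ * Mᴴ) * M) = (ε : ℂ) * trace (Pe⁻¹ * P) := by
      rw [h1, ← trace_sub, h2, trace_smul, smul_eq_mul]
    have h5 : (trace P).re - (trace ((Pe⁻¹ * Mᴴ) * M)).re = ε * (trace (Pe⁻¹ * P)).re := by
      have := congrArg Complex.re h4
      simpa [Complex.sub_re, Complex.mul_re] using this
    have h6 : ε * (trace (Pe⁻¹ * P)).re ≤ δ := by
      have hεc : ε * c = δ := by rw [hεdef]; field_simp
      calc ε * (trace (Pe⁻¹ * P)).re ≤ ε * Fintype.card n := by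
            exact mul_le_mul_of_nonneg_left h3 hε.le
        _ ≤ ε * c := by apply mul_le_mul_of_nonneg_left _ hε.le; rw [hc]; linarith
        _ = δ := hεc
    rw [traceNorm, ← hP]
    linarith

lemma psd_trace_re_nonneg {X : Matrix n n ℂ} (h : X.PosSemidef) : 0 ≤ X.trace.re := by
  rw [trace, Complex.re_sum]
  refine Finset.sum_nonneg fun i _ => ?_
  have h2 := h.dotProduct_mulVec_nonneg (Pi.single i 1)
  have h3 : dotProduct (star (Pi.single i 1 : n → ℂ)) (X *ᵥ Pi.single i 1) = X i i := by
    rw [mulVec_single]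
    simp [dotProduct, Pi.single_apply]
  rw [h3] at h2
  exact (Complex.le_def.mp h2).1

lemma traceNorm_nonneg (M : Matrix n n ℂ) : 0 ≤ traceNorm M :=
  psd_trace_re_nonneg (matSqrt_psd (posSemidef_conjTranspose_mul_self M))

lemma traceNorm_zero : traceNorm (0 : Matrix n n ℂ) = 0 := by
  have h0 : (0 : Matrix n n ℂ).PosSemidef := Matrix.PosSemidef.zero
  have : matSqrt ((0 : Matrix n n ℂ)ᴴ * 0) = 0 := by
    rw [mul_zero, matSqrt_of_psd h0]
    rw [cfc_apply_zero]
    simp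
  rw [traceNorm, this, trace_zero]
  simp

lemma traceNorm_add_le (M N : Matrix n n ℂ) :
    traceNorm (M + N) ≤ traceNorm M + traceNorm N := by
  refine le_of_forall_pos_le_add fun δ hδ => ?_
  obtain ⟨C, hC, h⟩ := exists_con_attain (M + N) hδ
  have h1 : (trace (C * (M + N))).re = (trace (C * M)).re + (trace (C * N)).re := by
    rw [mul_add, trace_add, Complex.add_re]
  have h2 := re_trace_con_le M hC
  have h3 := re_trace_con_le N hC
  rw [h1] at h
  linarith

lemma traceNorm_sum_le {ι : Type*} (s : Finset ι) (f : ι → Matrix n n ℂ) :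
    traceNorm (∑ i ∈ s, f i) ≤ ∑ i ∈ s, traceNorm (f i) := by
  induction s using Finset.cons_induction with
  | empty => simp [traceNorm_zero]
  | cons a s ha ih =>
    rw [Finset.sum_cons, Finset.sum_cons]
    exact (traceNorm_add_le _ _).trans (by linarith)

lemma matSqrt_smul {N : Matrix n n ℂ} (hN : N.PosSemidef) {r : ℝ} (hr : 0 ≤ r) :
    matSqrt ((r : ℂ) • N) = ((Real.sqrt r : ℝ) : ℂ) • matSqrt N := by
  have hB : ((r : ℂ) • N).PosSemidef := psd_smul_real hN hr
  have hA : (((Real.sqrt r : ℝ) : ℂ) • matSqrt N).PosSemidef :=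
    psd_smul_real (matSqrt_psd hN) (Real.sqrt_nonneg r)
  rw [matSqrt_of_psd hB, matSqrt_of_psd hN, Complex.coe_smul, Complex.coe_smul,
    ← cfc_comp_smul r Real.sqrt N (ha := hN.1.isSelfAdjoint), ← cfc_const_mul (√r) Real.sqrt N]
  congr 1
  funext x
  rw [smul_eq_mul, Real.sqrt_mul hr]

lemma traceNorm_smul (c : ℂ) (M : Matrix n n ℂ) :
    traceNorm (c • M) = ‖c‖ * traceNorm M := by
  have h1 : (c • M)ᴴ * (c • M) = ((‖c‖ ^ 2 : ℝ) : ℂ) • (Mᴴ * M) := by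
    rw [conjTranspose_smul, smul_mul_smul_comm]
    congr 1
    rw [Complex.star_def, ← Complex.normSq_eq_norm_sq]
    exact (Complex.normSq_eq_conj_mul_self (z := c)).symm
  rw [traceNorm, h1, matSqrt_smul (posSemidef_conjTranspose_mul_self M) (by positivity),
    trace_smul, Real.sqrt_sq (norm_nonneg c)]
  rw [smul_eq_mul, Complex.mul_re]
  simp [traceNorm]


def op {n : Type*} (v w : n → ℂ) : Matrix n n ℂ :=
  Matrix.of fun i j => v i * star (w j)

lemma eps_limit01 {a b c : ℝ} (h : ∀ ε : ℝ, 0 < ε → ε ≤ 1 → a ≤ b + ε * c) : a ≤ b := by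
  refine le_of_forall_pos_le_add fun δ hδ => ?_
  have hm : (0:ℝ) < max c 1 := lt_of_lt_of_le one_pos (le_max_right _ _)
  set ε : ℝ := min (δ / max c 1) 1 with hε
  have hε0 : 0 < ε := lt_min (by positivity) one_pos
  have hε1 : ε ≤ 1 := min_le_right _ _
  have h1 := h ε hε0 hε1
  have h2 : ε * c ≤ ε * max c 1 := mul_le_mul_of_nonneg_left (le_max_left _ _) hε0.le
  have h3 : ε * max c 1 ≤ (δ / max c 1) * max c 1 :=
    mul_le_mul_of_nonneg_right (min_le_left _ _) hm.le
  have h4 : (δ / max c 1) * max c 1 = δ := by field_simp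
  linarith

def mconj (M : Matrix m n ℂ) : Matrix m n ℂ := M.map (starRingEnd ℂ)

lemma mconj_mul (X : Matrix m n ℂ) (Y : Matrix n m ℂ) :
    mconj (X * Y) = mconj X * mconj Y := Matrix.map_mul

lemma mconj_mconj (X : Matrix m n ℂ) : mconj (mconj X) = X := by
  ext i j; simp [mconj]

lemma re_trace_mconj (X : Matrix n n ℂ) : (trace (mconj X)).re = (trace X).re := by
  rw [trace, trace, Complex.re_sum, Complex.re_sum]
  exact Finset.sum_congr rfl fun i _ => by simp [mconj, diag]

lemma en_star (x : n → ℂ) : en (star x) = en x := by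
  rw [en, en]
  congr 1
  exact Finset.sum_congr rfl fun i _ => by simp

lemma mconj_mulVec (M : Matrix m n ℂ) (x : n → ℂ) :
    (mconj M) *ᵥ x = star (M *ᵥ star x) := by
  funext i
  simp only [mulVec, dotProduct, mconj, map_apply, Pi.star_apply, star_sum]
  exact Finset.sum_congr rfl fun j _ => by simp

lemma con_mconj {M : Matrix m n ℂ} (hM : Con M) : Con (mconj M) := by
  intro x
  rw [mconj_mulVec, en_star]
  exact (hM (star x)).trans_eq (en_star x)

lemma conjTranspose_eq_mconj_transpose (M : Matrix m n ℂ) : Mᴴ = mconj Mᵀ := rfl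

/-- the key cross-term bound. -/
lemma cross_bound {A B : Type*} [Fintype A] [DecidableEq A] [Fintype B] [DecidableEq B]
    (γ δ : A × B → ℂ) :
    traceNorm (trFst (op γ δ)) ≤ fidelity (trSnd (outerP γ)) (trSnd (outerP δ)) := by
  set G : Matrix A B ℂ := Matrix.of (fun a b => γ (a, b)) with hGdef
  set D : Matrix A B ℂ := Matrix.of (fun a b => δ (a, b)) with hDdef
  have hρG : trSnd (outerP γ) = G * Gᴴ := by
    ext a a'
    simp [trSnd, outerP, mul_apply, conjTranspose_apply, hGdef]
  have hρD : trSnd (outerP δ) = D * Dᴴ := by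
    ext a a'
    simp [trSnd, outerP, mul_apply, conjTranspose_apply, hDdef]
  have hT : trFst (op γ δ) = Gᵀ * mconj D := by
    ext b b'
    simp [trFst, op, mul_apply, mconj, hGdef, hDdef]
  have hGpsd : (G * Gᴴ).PosSemidef := posSemidef_self_mul_conjTranspose G
  have hDpsd : (D * Dᴴ).PosSemidef := posSemidef_self_mul_conjTranspose D
  set T : Matrix B B ℂ := trFst (op γ δ)
  rw [hρG, hρD, fidelity]
  set P : Matrix A A ℂ := matSqrt (G * Gᴴ) with hPdef
  set Q : Matrix A A ℂ := matSqrt (D * Dᴴ) with hQdef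
  -- duality
  refine le_of_forall_pos_le_add fun δ' hδ' => ?_
  obtain ⟨C, hC, hatt⟩ := exists_con_attain T hδ'
  have key : (trace (C * T)).re ≤ traceNorm (P * Q) := by
    apply eps_limit01 (c := (trace P).re + (trace Q).re + Fintype.card A)
    intro ε hε hε1
    set Pe : Matrix A A ℂ := P + (ε:ℂ) • 1 with hPedef
    set Qe : Matrix A A ℂ := Q + (ε:ℂ) • 1 with hQedef
    set WG : Matrix A B ℂ := Pe⁻¹ * G with hWGdef
    set WD : Matrix A B ℂ := Qe⁻¹ * D with hWDdef
    have hGrec : G = Pe * WG := by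
      rw [hWGdef, ← Matrix.mul_assoc, Pe_mul_inv hGpsd hε, Matrix.one_mul]
    have hDrec : D = Qe * WD := by
      rw [hWDdef, ← Matrix.mul_assoc, Pe_mul_inv hDpsd hε, Matrix.one_mul]
    have hConWGH : Con WGᴴ := by
      apply con_of_psd
      have h1 : (WGᴴ)ᴴ * WGᴴ = Pe⁻¹ * (G * Gᴴ) * Pe⁻¹ := by
        rw [conjTranspose_conjTranspose, hWGdef, conjTranspose_mul,
          (Pe_inv_herm hGpsd hε).eq]
        simp only [Matrix.mul_assoc]
        rfl
      rw [h1]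
      exact psd_key hGpsd hε
    have hConWD : Con WD := by
      have h2 : Con WDᴴ := by
        apply con_of_psd
        have h1 : (WDᴴ)ᴴ * WDᴴ = Qe⁻¹ * (D * Dᴴ) * Qe⁻¹ := by
          rw [conjTranspose_conjTranspose, hWDdef, conjTranspose_mul,
            (Pe_inv_herm hDpsd hε).eq]
          simp only [Matrix.mul_assoc]
          rfl
        rw [h1]
        exact psd_key hDpsd hε
      have := con_conjTranspose h2
      rwa [conjTranspose_conjTranspose] at this
    set C' : Matrix B B ℂ := mconj C with hC'def
    have hConC' : Con C' := con_mconj hC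
    set E : Matrix A A ℂ := WD * C' * WGᴴ with hEdef
    have hConE : Con E := con_mul (con_mul hConWD hConC') hConWGH
    -- trace identity
    have htr1 : (trace (C * T)).re = (trace (C' * (Gᴴ * D))).re := by
      rw [← re_trace_mconj (C * T), mconj_mul, hC'def]
      congr 2
      rw [hT, mconj_mul, ← conjTranspose_eq_mconj_transpose, mconj_mconj]
    have htr2 : trace (C' * (Gᴴ * D)) = trace (E * (Pe * Qe)) := by
      have h1 : C' * (Gᴴ * D) = (C' * WGᴴ * Pe * Qe) * WD := by
        conv_lhs => rw [hGrec, hDrec]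
        rw [conjTranspose_mul, (Pe_herm hGpsd hε).eq]
        simp only [Matrix.mul_assoc]
        rfl
      rw [h1, trace_mul_comm]
      congr 1
      rw [hEdef]
      simp only [Matrix.mul_assoc]
    -- expansion
    have hexp : Pe * Qe = P * Q + (ε:ℂ) • P + (ε:ℂ) • Q + ((ε*ε : ℝ):ℂ) • 1 := by
      rw [hPedef, hQedef]
      simp only [Matrix.add_mul, Matrix.mul_add, smul_mul_assoc, mul_smul_comm,
        smul_smul, Matrix.mul_one, Matrix.one_mul]
      push_cast
      module
    have hsplit : trace (E * (Pe * Qe)) = trace (E * (P * Q)) + (ε:ℂ) * trace (E * P)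
        + (ε:ℂ) * trace (E * Q) + ((ε*ε : ℝ):ℂ) * trace E := by
      rw [hexp]
      simp only [Matrix.mul_add, Matrix.mul_smul, trace_add, trace_smul, smul_eq_mul]
      push_cast
      ring
    have hb1 : (trace (E * (P * Q))).re ≤ traceNorm (P * Q) := re_trace_con_le _ hConE
    have hb2 : (trace (E * P)).re ≤ (trace P).re :=
      re_trace_con_psd_le hConE (matSqrt_psd hGpsd)
    have hb3 : (trace (E * Q)).re ≤ (trace Q).re :=
      re_trace_con_psd_le hConE (matSqrt_psd hDpsd)
    have hb4 : (trace E).re ≤ Fintype.card A := by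
      have := re_trace_con_psd_le hConE (Matrix.PosSemidef.one (n := A) (R := ℂ))
      rw [Matrix.mul_one] at this
      simpa [trace_one] using this
    have hPn : 0 ≤ (trace P).re := by
      have := (matSqrt_psd hGpsd)
      rw [← hPdef] at this
      rw [trace, Complex.re_sum]
      refine Finset.sum_nonneg fun i _ => ?_
      have h2 := this.dotProduct_mulVec_nonneg (Pi.single i 1)
      have h3 : dotProduct (star (Pi.single i 1 : A → ℂ)) (P *ᵥ Pi.single i 1) = P i i := by
        rw [mulVec_single]
        simp [dotProduct, Pi.single_apply]
      rw [h3] at h2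
      exact (Complex.le_def.mp h2).1
    have hQn : 0 ≤ (trace Q).re := by
      have := (matSqrt_psd hDpsd)
      rw [← hQdef] at this
      rw [trace, Complex.re_sum]
      refine Finset.sum_nonneg fun i _ => ?_
      have h2 := this.dotProduct_mulVec_nonneg (Pi.single i 1)
      have h3 : dotProduct (star (Pi.single i 1 : A → ℂ)) (Q *ᵥ Pi.single i 1) = Q i i := by
        rw [mulVec_single]
        simp [dotProduct, Pi.single_apply]
      rw [h3] at h2
      exact (Complex.le_def.mp h2).1
    have hre : (trace (E * (Pe * Qe))).re = (trace (E * (P * Q))).re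
        + ε * (trace (E * P)).re + ε * (trace (E * Q)).re + (ε*ε) * (trace E).re := by
      rw [hsplit]
      simp [Complex.add_re, Complex.mul_re]
    rw [htr1, htr2, hre]
    have hcard : (0:ℝ) ≤ Fintype.card A := by positivity
    have e2 : ε * (trace (E * P)).re ≤ ε * (trace P).re :=
      mul_le_mul_of_nonneg_left hb2 hε.le
    have e3 : ε * (trace (E * Q)).re ≤ ε * (trace Q).re :=
      mul_le_mul_of_nonneg_left hb3 hε.le
    have e4 : ε * ε * (trace E).re ≤ ε * ε * Fintype.card A :=
      mul_le_mul_of_nonneg_left hb4 (by positivity)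
    have e5 : ε * ε * (Fintype.card A : ℝ) ≤ ε * Fintype.card A := by
      apply mul_le_mul_of_nonneg_right _ hcard
      nlinarith
    linarith
  linarith


end Aux

open Aux

lemma real_smul_mat {n : Type*} (r : ℝ) (X : Matrix n n ℂ) :
    r • X = ((r : ℂ)) • X := by
  ext i j
  simp [Complex.real_smul]

lemma trFst_sum_expand {I A B : Type*} [Fintype I] [Fintype A] [Fintype B]
    (γ : I → A × B → ℂ) (α : I → ℂ) :
    trFst (outerP (∑ i, α i • γ i))
      = ∑ i, ∑ j, (α i * star (α j)) • trFst (op (γ i) (γ j)) := by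
  ext b b'
  simp only [trFst, outerP, op, Matrix.of_apply, Matrix.sum_apply, Matrix.smul_apply,
    Finset.sum_apply, Pi.smul_apply, smul_eq_mul, star_sum, Pi.star_apply, star_mul',
    Finset.mul_sum, Finset.sum_mul]
  rw [Finset.sum_comm]
  conv_rhs => rw [Finset.sum_comm]
  refine Finset.sum_congr rfl fun i _ => ?_
  rw [Finset.sum_comm]
  refine Finset.sum_congr rfl fun j _ => ?_
  refine Finset.sum_congr rfl fun a _ => ?_
  ring

theorem stmt8 {I A B : Type*} [Fintype I] [DecidableEq I]
    [Fintype A] [DecidableEq A] [Fintype B] [DecidableEq B]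
    (γ : I → A × B → ℂ) (α β : I → ℂ) :
    traceDist (trFst (outerP (∑ i, α i • γ i))) (trFst (outerP (∑ i, β i • γ i)))
      ≤ (⨅ σ : Equiv.Perm I, ∑ i,
            traceDist (‖α i‖^2 • trFst (outerP (γ i)))
              (‖β (σ i)‖^2 • trFst (outerP (γ (σ i)))))
        + ∑ i, ∑ j ∈ Finset.univ.erase i,
            ‖α i * star (α j) - β i * star (β j)‖
              * fidelity (trSnd (outerP (γ i))) (trSnd (outerP (γ j))) := by
  set T : I → I → Matrix B B ℂ := fun i j => trFst (op (γ i) (γ j)) with hT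
  set cross : ℝ := ∑ i, ∑ j ∈ Finset.univ.erase i,
      ‖α i * star (α j) - β i * star (β j)‖
        * fidelity (trSnd (outerP (γ i))) (trSnd (outerP (γ j))) with hcross
  have key : ∀ σ : Equiv.Perm I,
      traceDist (trFst (outerP (∑ i, α i • γ i))) (trFst (outerP (∑ i, β i • γ i)))
        ≤ (∑ i, traceDist (‖α i‖^2 • trFst (outerP (γ i)))
            (‖β (σ i)‖^2 • trFst (outerP (γ (σ i))))) + cross := by
    intro σ
    -- decomposition
    have hdecomp : trFst (outerP (∑ i, α i • γ i)) - trFst (outerP (∑ i, β i • γ i))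
        = ∑ i, (((α i * star (α i)) • T i i - (β (σ i) * star (β (σ i))) • T (σ i) (σ i))
            + ∑ j ∈ Finset.univ.erase i,
                (α i * star (α j) - β i * star (β j)) • T i j) := by
      rw [trFst_sum_expand γ α, trFst_sum_expand γ β]
      have hβdiag : ∑ i, (β (σ i) * star (β (σ i))) • T (σ i) (σ i)
          = ∑ i, (β i * star (β i)) • T i i :=
        Equiv.sum_comp σ (fun i => (β i * star (β i)) • T i i)
      have hsplitα : ∀ i : I, (∑ j, (α i * star (α j)) • T i j)
          = (α i * star (α i)) • T i i
            + ∑ j ∈ Finset.univ.erase i, (α i * star (α j)) • T i j := by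
        intro i
        rw [← Finset.add_sum_erase _ _ (Finset.mem_univ i)]
      have hsplitβ : ∀ i : I, (∑ j, (β i * star (β j)) • T i j)
          = (β i * star (β i)) • T i i
            + ∑ j ∈ Finset.univ.erase i, (β i * star (β j)) • T i j := by
        intro i
        rw [← Finset.add_sum_erase _ _ (Finset.mem_univ i)]
      have hTij : ∀ i j, trFst (op (γ i) (γ j)) = T i j := fun _ _ => rfl
      simp only [hTij]
      simp only [hsplitα, hsplitβ]
      have hz : ∀ i : I, ∑ j ∈ Finset.univ.erase i,
          (α i * star (α j) - β i * star (β j)) • T i j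
          = (∑ j ∈ Finset.univ.erase i, (α i * star (α j)) • T i j)
            - ∑ j ∈ Finset.univ.erase i, (β i * star (β j)) • T i j := by
        intro i
        rw [← Finset.sum_sub_distrib]
        exact Finset.sum_congr rfl fun j _ => sub_smul _ _ _
      simp only [Finset.sum_add_distrib, Finset.sum_sub_distrib, hz]
      rw [hβdiag]
      abel
    -- bound
    have hb : traceNorm (trFst (outerP (∑ i, α i • γ i)) - trFst (outerP (∑ i, β i • γ i)))
        ≤ ∑ i, (traceNorm ((α i * star (α i)) • T i i
              - (β (σ i) * star (β (σ i))) • T (σ i) (σ i))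
            + ∑ j ∈ Finset.univ.erase i,
                ‖α i * star (α j) - β i * star (β j)‖
                  * fidelity (trSnd (outerP (γ i))) (trSnd (outerP (γ j)))) := by
      rw [hdecomp]
      refine (traceNorm_sum_le _ _).trans (Finset.sum_le_sum fun i _ => ?_)
      refine (traceNorm_add_le _ _).trans ?_
      refine add_le_add_right ((traceNorm_sum_le _ _).trans
        (Finset.sum_le_sum fun j _ => ?_)) _
      rw [traceNorm_smul]
      exact mul_le_mul_of_nonneg_left (cross_bound (γ i) (γ j)) (norm_nonneg _)
    -- rewrite the diagonal terms as traceDist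
    have hdiag : ∀ i : I, traceNorm ((α i * star (α i)) • T i i
          - (β (σ i) * star (β (σ i))) • T (σ i) (σ i))
        = 2 * traceDist (‖α i‖^2 • trFst (outerP (γ i)))
            (‖β (σ i)‖^2 • trFst (outerP (γ (σ i)))) := by
      intro i
      rw [traceDist]
      have h1 : ∀ (v : I → ℂ) (k : I), (v k * star (v k)) • T k k
          = ‖v k‖^2 • trFst (outerP (γ k)) := by
        intro v k
        rw [show trFst (outerP (γ k)) = T k k from rfl, real_smul_mat]
        congr 1
        rw [← Complex.normSq_eq_norm_sq]
        exact_mod_cast (Complex.mul_conj (v k))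
      rw [h1 α i, h1 β (σ i)]
      ring
    have hsum : ∑ i, (traceNorm ((α i * star (α i)) • T i i
          - (β (σ i) * star (β (σ i))) • T (σ i) (σ i))) / 2
        = ∑ i, traceDist (‖α i‖^2 • trFst (outerP (γ i)))
            (‖β (σ i)‖^2 • trFst (outerP (γ (σ i)))) := by
      refine Finset.sum_congr rfl fun i _ => ?_
      rw [hdiag i]; ring
    rw [traceDist]
    rw [Finset.sum_add_distrib] at hb
    have e1 : (∑ i, traceNorm ((α i * star (α i)) • T i i
          - (β (σ i) * star (β (σ i))) • T (σ i) (σ i))) / 2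
        = ∑ i, traceDist (‖α i‖^2 • trFst (outerP (γ i)))
            (‖β (σ i)‖^2 • trFst (outerP (γ (σ i)))) := by
      rw [Finset.sum_div]
      exact hsum
    have e2 : (0:ℝ) ≤ ∑ i, ∑ j ∈ Finset.univ.erase i,
        ‖α i * star (α j) - β i * star (β j)‖
          * fidelity (trSnd (outerP (γ i))) (trSnd (outerP (γ j))) := by
      refine Finset.sum_nonneg fun i _ => Finset.sum_nonneg fun j _ => ?_
      exact mul_nonneg (norm_nonneg _) (traceNorm_nonneg _)
    rw [hcross]
    linarith
  -- conclude via iInf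
  have h2 : traceDist (trFst (outerP (∑ i, α i • γ i))) (trFst (outerP (∑ i, β i • γ i)))
      - cross ≤ ⨅ σ : Equiv.Perm I, ∑ i,
        traceDist (‖α i‖^2 • trFst (outerP (γ i)))
          (‖β (σ i)‖^2 • trFst (outerP (γ (σ i)))) := by
    refine le_ciInf fun σ => ?_
    linarith [key σ]
  linarith [h2]
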